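/- Let k ⊆ k' be a finite field extension, G a finite group, and M, N finitely generated kG-modules. If k' ⊗_k M is isomorphic to a direct summand of k' ⊗_k N as k'G-modules, then M is isomorphic to a direct summand of N as kG-modules (Noether–Deuring theorem). -/

import Mathlib

/-!
Restricted to `k`, the representation `k' ⊗[k] V` is `V ^ d` with `d = [k' : k]`, so `V ^ d` is
a direct summand of `W ^ d` as a `k[G]`-module, and it remains to cancel the exponent
(Krull–Schmidt). Split `V = P ⊕ Q` with `P` indecomposable. By Fitting's lemma `End P` is local,
so `P`, a summand of `W ^ d`, is a summand of one factor: `W ≅ P ⊕ W'`. Summands with local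
endomorphism ring cancel from direct sums, hence so do all modules of finite length; cancelling
`P ^ d` from `P ^ d ⊕ Q ^ d ↪ P ^ d ⊕ W' ^ d` and inducting on the length of `V` gives `Q ↪ W'`
split, so `V ↪ W` split.
-/

open TensorProduct Module

noncomputable section

universe v

theorem IsLocalRing.isDedekindFiniteMonoid (R : Type*) [Ring R] [IsLocalRing R] :
    IsDedekindFiniteMonoid R where
  mul_eq_one_symm {a b} hab := by
    have hidem : b * a * (b * a) = b * a := by rw [mul_assoc, ← mul_assoc a, hab, one_mul]
    rcases IsLocalRing.isUnit_or_isUnit_of_add_one (sub_add_cancel 1 (b * a)) with h | h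
    · have hb : (1 - b * a) * b = 0 := by rw [sub_mul, one_mul, mul_assoc, hab, mul_one, sub_self]
      rw [h.mul_right_eq_zero] at hb
      simp [hb] at hab
    · exact h.mul_left_cancel (by rw [hidem, mul_one])

variable (R : Type*) [Semiring R] in
def LinearEquiv.arrowProdEquivProdArrow (α : Type*) (β γ : α → Type*)
    [∀ a, AddCommMonoid (β a)] [∀ a, Module R (β a)] [∀ a, AddCommMonoid (γ a)]
    [∀ a, Module R (γ a)] : (∀ a, β a × γ a) ≃ₗ[R] (∀ a, β a) × (∀ a, γ a) where
  __ := Equiv.arrowProdEquivProdArrow α β γ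
  map_add' _ _ := rfl
  map_smul' _ _ := rfl

namespace Module

variable {A M N : Type*} [Ring A] [AddCommGroup M] [Module A M] [AddCommGroup N] [Module A N]

variable (A M) in
def IsIndecomposable : Prop :=
  Nontrivial M ∧ ∀ p q : Submodule A M, IsCompl p q → p = ⊥ ∨ q = ⊥

theorem IsIndecomposable.isLocalRing [IsNoetherian A M] [IsArtinian A M]
    (hM : IsIndecomposable A M) : IsLocalRing (Module.End A M) := by
  have := hM.1
  refine IsLocalRing.of_isUnit_or_isUnit_one_sub_self fun f => ?_
  obtain ⟨n, hn⟩ := (f.eventually_isCompl_ker_pow_range_pow.and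
    (Filter.eventually_gt_atTop 0)).exists
  rcases hM.2 _ _ hn.1 with hker | hrange
  · left
    obtain ⟨m, rfl⟩ := Nat.exists_eq_succ_of_ne_zero hn.2.ne'
    have hinj : Function.Injective (f ^ m * f) := by
      rw [← pow_succ]; exact LinearMap.ker_eq_bot.mp hker
    exact (Module.End.isUnit_iff f).mpr
      (IsArtinian.bijective_of_injective_endomorphism f (Function.Injective.of_comp hinj))
  · exact Or.inr (IsNilpotent.isUnit_one_sub ⟨n, LinearMap.range_eq_bot.mp hrange⟩)

theorem exists_isCompl_isIndecomposable [IsArtinian A M] [Nontrivial M] :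
    ∃ p q : Submodule A M, IsCompl p q ∧ IsIndecomposable A p := by
  -- a minimal nonzero direct summand is indecomposable
  obtain ⟨p, ⟨hp, q, hpq⟩, hmin⟩ := wellFounded_lt.has_min
    {p : Submodule A M | p ≠ ⊥ ∧ IsComplemented p} ⟨⊤, top_ne_bot, isComplemented_top⟩
  refine ⟨p, q, hpq, Submodule.nontrivial_iff_ne_bot.mpr hp, fun r r' hr => ?_⟩
  have hmap := Submodule.map_injective_of_injective p.injective_subtype
  have hsup : r.map p.subtype ⊔ r'.map p.subtype = p := by
    rw [← Submodule.map_sup, hr.sup_eq_top, Submodule.map_subtype_top]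
  have hcompl : IsCompl (r.map p.subtype) (r'.map p.subtype ⊔ q) := by
    refine ⟨(Submodule.disjoint_map p.injective_subtype hr.disjoint)
      |>.disjoint_sup_right_of_disjoint_sup_left (by rw [hsup]; exact hpq.disjoint), ?_⟩
    rw [codisjoint_iff, ← sup_assoc, hsup, hpq.sup_eq_top]
  by_cases hr0 : r.map p.subtype = ⊥
  · exact Or.inl (hmap (by rw [hr0, Submodule.map_bot]))
  · have hrp : r.map p.subtype = p :=
      (Submodule.map_subtype_le p r).eq_of_not_lt (hmin _ ⟨hr0, _, hcompl⟩)
    have hr' : r = ⊤ := hmap (by rw [hrp, Submodule.map_subtype_top])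
    rw [hr'] at hr
    exact Or.inr (eq_bot_of_top_isCompl hr)

variable (A M N) in
def IsDirectSummand : Prop :=
  ∃ (f : M →ₗ[A] N) (g : N →ₗ[A] M), g ∘ₗ f = LinearMap.id

theorem _root_.LinearEquiv.isDirectSummand (e : M ≃ₗ[A] N) : IsDirectSummand A M N :=
  ⟨e, e.symm, by ext; simp⟩

theorem IsDirectSummand.trans {P : Type*} [AddCommGroup P] [Module A P]
    (hMN : IsDirectSummand A M N) (hNP : IsDirectSummand A N P) : IsDirectSummand A M P := by
  obtain ⟨f, g, hgf⟩ := hMN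
  obtain ⟨f', g', hgf'⟩ := hNP
  refine ⟨f' ∘ₗ f, g ∘ₗ g', ?_⟩
  rw [LinearMap.comp_assoc, ← LinearMap.comp_assoc f, hgf', LinearMap.id_comp, hgf]

theorem IsDirectSummand.prodMap {M' N' : Type*} [AddCommGroup M'] [Module A M']
    [AddCommGroup N'] [Module A N'] (h : IsDirectSummand A M N) (h' : IsDirectSummand A M' N') :
    IsDirectSummand A (M × M') (N × N') := by
  obtain ⟨f, g, hgf⟩ := h
  obtain ⟨f', g', hgf'⟩ := h'
  exact ⟨f.prodMap f', g.prodMap g',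
    by rw [LinearMap.prodMap_comp, hgf, hgf', LinearMap.prodMap_id]⟩

variable (A M N) in
theorem isDirectSummand_prod : IsDirectSummand A M (M × N) :=
  ⟨LinearMap.inl A M N, LinearMap.fst A M N, LinearMap.fst_comp_inl A M N⟩

theorem isDirectSummand_congr {M' N' : Type*} [AddCommGroup M'] [Module A M']
    [AddCommGroup N'] [Module A N'] (eM : M ≃ₗ[A] M') (eN : N ≃ₗ[A] N') :
    IsDirectSummand A M N ↔ IsDirectSummand A M' N' :=
  ⟨fun h => eM.symm.isDirectSummand.trans (h.trans eN.isDirectSummand),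
    fun h => eM.isDirectSummand.trans (h.trans eN.symm.isDirectSummand)⟩

theorem _root_.Submodule.isDirectSummand_of_isCompl {p q : Submodule A M} (h : IsCompl p q) :
    IsDirectSummand A p M :=
  (isDirectSummand_prod A p q).trans (Submodule.prodEquivOfIsCompl p q h).isDirectSummand

variable (A M) in
theorem isDirectSummand_pi_self (ι : Type*) [Nonempty ι] : IsDirectSummand A M (ι → M) := by
  classical
  obtain ⟨i⟩ := ‹Nonempty ι›
  exact ⟨LinearMap.single A (fun _ => M) i, LinearMap.proj i, LinearMap.proj_comp_single_same ..⟩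

theorem IsDirectSummand.exists_linearEquiv_prod (h : IsDirectSummand A M N) :
    ∃ C : Submodule A N, Nonempty (N ≃ₗ[A] M × (N ⧸ C)) := by
  obtain ⟨f, g, hgf⟩ := h
  exact ⟨_, ⟨((LinearMap.exact_map_mkQ_range f).splitInjectiveEquiv
    (Submodule.mkQ_surjective _) ⟨g, hgf⟩).1⟩⟩

theorem IsDirectSummand.exists_of_pi_of_isLocalRing [IsLocalRing (Module.End A M)]
    {ι : Type*} [Fintype ι]
    {N : ι → Type*} [∀ i, AddCommGroup (N i)] [∀ i, Module A (N i)]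
    (h : IsDirectSummand A M (∀ i, N i)) : ∃ i, IsDirectSummand A M (N i) := by
  classical
  obtain ⟨f, g, hgf⟩ := h
  have hsum : ∑ i, g ∘ₗ LinearMap.single A N i ∘ₗ LinearMap.proj i ∘ₗ f = 1 := by
    ext m
    simp only [LinearMap.sum_apply, LinearMap.comp_apply, LinearMap.single_apply,
      LinearMap.proj_apply, ← map_sum, Finset.univ_sum_single]
    exact LinearMap.congr_fun hgf m
  obtain ⟨i, -, hi⟩ := IsLocalRing.exists_of_isUnit_sum (hsum ▸ isUnit_one)
  refine ⟨i, LinearMap.proj i ∘ₗ f, ↑hi.unit⁻¹ ∘ₗ g ∘ₗ LinearMap.single A N i, ?_⟩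
  simp only [LinearMap.comp_assoc]
  exact hi.val_inv_mul

section Cancellation

variable {L X Y : Type*} [AddCommGroup L] [Module A L] [AddCommGroup X] [Module A X]
  [AddCommGroup Y] [Module A Y]

theorem IsDirectSummand.of_prod_prod_of_isUnit (I : L × X →ₗ[A] L × Y) (P : L × Y →ₗ[A] L × X)
    (hPI : P ∘ₗ I = LinearMap.id) (s : Y →ₗ[A] L)
    (hu : IsUnit ((LinearMap.fst A L Y + s ∘ₗ LinearMap.snd A L Y) ∘ₗ I ∘ₗ LinearMap.inl A L X)) :
    IsDirectSummand A X Y := by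
  set π₀ := LinearMap.fst A L Y + s ∘ₗ LinearMap.snd A L Y
  set ι₁ := I ∘ₗ LinearMap.inl A L X
  -- `r` projects onto `ker π₀ = {(-s y, y)}` along the image of `L`; the map `X → Y` is the
  -- `Y`-coordinate of the projection of `I (0, x)`
  set r := LinearMap.id - ι₁ ∘ₗ ↑hu.unit⁻¹ ∘ₗ π₀
  refine ⟨LinearMap.snd A L Y ∘ₗ r ∘ₗ I ∘ₗ LinearMap.inr A L X,
    LinearMap.snd A L X ∘ₗ P ∘ₗ (-s).prod LinearMap.id, LinearMap.ext fun x => ?_⟩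
  have hr : ∀ z, π₀ (r z) = 0 := fun z => by
    have := LinearMap.congr_fun hu.mul_val_inv (π₀ z)
    rw [Module.End.mul_apply, LinearMap.comp_apply, Module.End.one_apply] at this
    simp only [r, LinearMap.sub_apply, LinearMap.id_apply, LinearMap.comp_apply, map_sub, this,
      sub_self]
  have hgraph : ∀ z, π₀ z = 0 → (-s z.2, z.2) = z := fun z hz => by
    refine Prod.ext ?_ rfl
    simpa [π₀, neg_eq_iff_add_eq_zero, add_comm] using hz
  have hPI' : ∀ w, P (I w) = w := LinearMap.congr_fun hPI
  set z := r (I (0, x))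
  change (P (-s z.2, z.2)).2 = x
  rw [hgraph z (hr _)]
  simp [z, r, ι₁, hPI']

theorem IsDirectSummand.of_prod_prod_of_isLocalRing [IsLocalRing (Module.End A L)]
    (h : IsDirectSummand A (L × X) (L × Y)) : IsDirectSummand A X Y := by
  obtain ⟨I, P, hPI⟩ := h
  set a : Module.End A L := LinearMap.fst A L Y ∘ₗ I ∘ₗ LinearMap.inl A L X
  set c := LinearMap.snd A L Y ∘ₗ I ∘ₗ LinearMap.inl A L X
  set a' : Module.End A L := LinearMap.fst A L X ∘ₗ P ∘ₗ LinearMap.inl A L Y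
  set c' := LinearMap.fst A L X ∘ₗ P ∘ₗ LinearMap.inr A L Y
  have hsum : a' * a + c' ∘ₗ c = 1 := by
    ext l
    calc (a' * a + c' ∘ₗ c) l = (P (a l, 0) + P (0, c l)).1 := rfl
      _ = (P (I (l, 0))).1 := by rw [← map_add, Prod.mk_add_mk, add_zero, zero_add]; rfl
      _ = l := by rw [show P (I (l, 0)) = (l, 0) from LinearMap.congr_fun hPI _]
  have hπ₀ : ∀ s : Y →ₗ[A] L, (LinearMap.fst A L Y + s ∘ₗ LinearMap.snd A L Y) ∘ₗ I ∘ₗ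
      LinearMap.inl A L X = a + s ∘ₗ c := fun s => by ext; simp [a, c]
  -- one of `a' * a`, `c' ∘ c` is a unit; choose `s` accordingly to make `a + s ∘ c` one
  rcases IsLocalRing.isUnit_or_isUnit_of_add_one hsum with hu | hu
  · have := IsLocalRing.isDedekindFiniteMonoid (Module.End A L)
    refine .of_prod_prod_of_isUnit I P hPI 0 ?_
    simpa [hπ₀] using isUnit_of_mul_isUnit_right hu
  · refine .of_prod_prod_of_isUnit I P hPI (((1 - a) * ↑hu.unit⁻¹ : Module.End A L) ∘ₗ c') ?_
    have hone : a + (1 - a) * ↑hu.unit⁻¹ * (c' ∘ₗ c : Module.End A L) = 1 := by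
      rw [mul_assoc, hu.val_inv_mul, mul_one, add_sub_cancel]
    rw [hπ₀, LinearMap.comp_assoc]
    exact (congrArg IsUnit hone).mpr isUnit_one

end Cancellation

theorem induction_on_isCompl_isLocalRing
    {motive : ∀ (M : Type v) [AddCommGroup M] [Module A M], Prop}
    (subsingleton : ∀ (M : Type v) [AddCommGroup M] [Module A M] [Subsingleton M], motive M)
    (isCompl : ∀ (M : Type v) [AddCommGroup M] [Module A M] [IsNoetherian A M] [IsArtinian A M]
      (p q : Submodule A M),
      IsCompl p q → IsLocalRing (Module.End A p) → motive q → motive M)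
    (M : Type v) [AddCommGroup M] [Module A M] [IsNoetherian A M] [IsArtinian A M] :
    motive M := by
  suffices ∀ n : ℕ, ∀ (M : Type v) [AddCommGroup M] [Module A M] [IsNoetherian A M]
      [IsArtinian A M], Module.length A M ≤ n → motive M from
    this _ M (ENat.natCast_toNat Module.length_ne_top).ge
  intro n
  induction n with
  | zero =>
    intro M _ _ _ _ hM
    have : Subsingleton M := Module.length_eq_zero_iff.mp (nonpos_iff_eq_zero.mp hM)
    exact subsingleton M
  | succ n ih =>
    intro M _ _ _ _ hM
    rcases subsingleton_or_nontrivial M with hM' | hM'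
    · exact subsingleton M
    obtain ⟨p, q, hpq, hp⟩ := exists_isCompl_isIndecomposable (A := A) (M := M)
    refine isCompl M p q hpq hp.isLocalRing (ih q ?_)
    have hq : q ≠ ⊤ := fun hq => by
      have := hp.1
      exact (Submodule.nontrivial_iff_ne_bot.mp this) (eq_bot_of_isCompl_top (hq ▸ hpq))
    exact (ENat.lt_add_one_iff (ENat.natCast_ne_top n)).mp ((Submodule.length_lt hq).trans_le hM)

theorem IsDirectSummand.of_prod_prod {L X Y : Type*} [AddCommGroup L] [Module A L]
    [IsNoetherian A L] [IsArtinian A L] [AddCommGroup X] [Module A X] [AddCommGroup Y]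
    [Module A Y] (h : IsDirectSummand A (L × X) (L × Y)) : IsDirectSummand A X Y := by
  refine induction_on_isCompl_isLocalRing (motive := fun L [AddCommGroup L] [Module A L] =>
    ∀ (X : Type _) (Y : Type _) [AddCommGroup X] [Module A X] [AddCommGroup Y] [Module A Y],
    IsDirectSummand A (L × X) (L × Y) → IsDirectSummand A X Y) ?_ ?_ L X Y h
  · intro L _ _ _ X Y _ _ _ _ h
    have : Unique L := uniqueOfSubsingleton 0
    exact (isDirectSummand_congr (LinearEquiv.uniqueProd ..) (LinearEquiv.uniqueProd ..)).mp h
  · intro L _ _ _ _ p q hpq hp ih X Y _ _ _ _ h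
    let e := Submodule.prodEquivOfIsCompl p q hpq
    refine ih _ _ (IsDirectSummand.of_prod_prod_of_isLocalRing (L := p) ?_)
    refine (isDirectSummand_congr ?_ ?_).mp h <;>
      exact (e.symm.prodCongr (LinearEquiv.refl A _)).trans (LinearEquiv.prodAssoc A _ _ _)

theorem IsDirectSummand.of_pi_pi [IsNoetherian A M] [IsArtinian A M] {ι : Type*} [Finite ι]
    [Nonempty ι] (h : IsDirectSummand A (ι → M) (ι → N)) : IsDirectSummand A M N := by
  have := Fintype.ofFinite ι
  refine induction_on_isCompl_isLocalRing (motive := fun M [AddCommGroup M] [Module A M] =>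
    ∀ (N : Type _) [AddCommGroup N] [Module A N],
    IsDirectSummand A (ι → M) (ι → N) → IsDirectSummand A M N) ?_ ?_ M N h
  · intro M _ _ _ N _ _ _
    exact ⟨0, 0, Subsingleton.elim _ _⟩
  · intro M _ _ _ _ p q hpq hp ih N _ _ h
    obtain ⟨i, hpN⟩ := IsDirectSummand.exists_of_pi_of_isLocalRing (N := fun _ : ι => N)
      ((Submodule.isDirectSummand_of_isCompl hpq).trans ((isDirectSummand_pi_self A M ι).trans h))
    obtain ⟨C, ⟨eN⟩⟩ := hpN.exists_linearEquiv_prod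
    let eM := Submodule.prodEquivOfIsCompl p q hpq
    have hq : IsDirectSummand A q (N ⧸ C) := by
      refine ih _ (IsDirectSummand.of_prod_prod (L := ι → p) ?_)
      refine (isDirectSummand_congr ?_ ?_).mp h
      · exact (LinearEquiv.piCongrRight fun _ => eM.symm).trans
          (LinearEquiv.arrowProdEquivProdArrow A ι _ _)
      · exact (LinearEquiv.piCongrRight fun _ => eN).trans
          (LinearEquiv.arrowProdEquivProdArrow A ι _ _)
    exact (isDirectSummand_congr eM eN.symm).mp ((LinearEquiv.refl A p).isDirectSummand.prodMap hq)

end Module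

section BaseChange

variable {k k' ι : Type*} [CommSemiring k] [AddCommMonoid k'] [Module k k'] [Finite ι]
  [DecidableEq ι]
  {V W : Type*} [AddCommMonoid V] [Module k V] [AddCommMonoid W] [Module k W]

variable (V) in
def Module.Basis.tensorEquivPi (b : Basis ι k k') : k' ⊗[k] V ≃ₗ[k] (ι → V) :=
  (TensorProduct.congr b.repr (LinearEquiv.refl k V)).trans
    ((TensorProduct.finsuppScalarLeft k V ι).trans (Finsupp.linearEquivFunOnFinite k V ι))

theorem Module.Basis.tensorEquivPi_tmul (b : Basis ι k k') (x : k') (v : V) :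
    b.tensorEquivPi V (x ⊗ₜ v) = fun i => b.repr x i • v := by
  ext i
  simp [tensorEquivPi]

theorem Module.Basis.tensorEquivPi_lTensor (b : Basis ι k k') (f : V →ₗ[k] W) (t : k' ⊗[k] V) :
    b.tensorEquivPi W (f.lTensor k' t) = fun i => f (b.tensorEquivPi V t i) := by
  induction t with
  | zero => ext; simp
  | tmul x v => simp [tensorEquivPi_tmul]
  | add t t' ht ht' => ext; simp [ht, ht']

end BaseChange

namespace Representation

open MonoidAlgebra

variable {k G V W : Type*} [CommRing k] [Monoid G] [AddCommGroup V] [Module k V]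
  [AddCommGroup W] [Module k W] {ρ : Representation k G V} {σ : Representation k G W}

theorem exists_intertwining_retraction_of_isDirectSummand
    (h : IsDirectSummand k[G] ρ.asModule σ.asModule) :
    ∃ (i : V →ₗ[k] W) (pr : W →ₗ[k] V), (∀ g, i ∘ₗ ρ g = σ g ∘ₗ i) ∧
      (∀ g, pr ∘ₗ σ g = ρ g ∘ₗ pr) ∧ pr ∘ₗ i = LinearMap.id := by
  obtain ⟨f, g, hgf⟩ := h
  let f' := (IntertwiningMap.equivLinearMapAsModule ρ σ).symm f
  let g' := (IntertwiningMap.equivLinearMapAsModule σ ρ).symm g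
  exact ⟨f'.toLinearMap, g'.toLinearMap, f'.isIntertwining', g'.isIntertwining',
    LinearMap.ext fun v => LinearMap.congr_fun hgf v⟩

variable {k' ι : Type*} [CommRing k'] [Algebra k k'] [Finite ι] [DecidableEq ι]

variable (ρ) in
def tensorEquivPiAsModule (b : Basis ι k k') : k' ⊗[k] V ≃ₗ[k] (ι → ρ.asModule) :=
  (b.tensorEquivPi V).trans (LinearEquiv.piCongrRight fun _ => ρ.asModuleEquiv.symm)

theorem tensorEquivPiAsModule_baseChange (b : Basis ι k k') (g : G) (t : k' ⊗[k] V) :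
    tensorEquivPiAsModule ρ b ((ρ g).baseChange k' t) =
      single g (1 : k) • tensorEquivPiAsModule ρ b t := by
  ext i
  simp only [tensorEquivPiAsModule, LinearMap.baseChange_eq_ltensor, LinearEquiv.trans_apply,
    Basis.tensorEquivPi_lTensor, LinearEquiv.piCongrRight_apply, asModuleEquiv_symm_map_rho,
    of_apply, single_smul, LinearEquiv.apply_symm_apply, one_smul, Pi.smul_apply]
  rfl

def piAsModuleHomOfBaseChange (b : Basis ι k k') (φ : k' ⊗[k] V →ₗ[k'] k' ⊗[k] W)
    (hφ : ∀ g, φ ∘ₗ (ρ g).baseChange k' = (σ g).baseChange k' ∘ₗ φ) :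
    (ι → ρ.asModule) →ₗ[k[G]] (ι → σ.asModule) :=
  equivariantOfLinearOfComm ((tensorEquivPiAsModule σ b).toLinearMap ∘ₗ φ.restrictScalars k ∘ₗ
    (tensorEquivPiAsModule ρ b).symm.toLinearMap) fun g u => by
    obtain ⟨t, rfl⟩ := (tensorEquivPiAsModule ρ b).surjective u
    simp only [LinearMap.comp_apply, LinearEquiv.coe_coe, ← tensorEquivPiAsModule_baseChange,
      LinearEquiv.symm_apply_apply, LinearMap.restrictScalars_apply]
    rw [← LinearMap.comp_apply φ, hφ, LinearMap.comp_apply]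

theorem isDirectSummand_pi_asModule_of_baseChange (b : Basis ι k k')
    (i : k' ⊗[k] V →ₗ[k'] k' ⊗[k] W) (pr : k' ⊗[k] W →ₗ[k'] k' ⊗[k] V)
    (hi : ∀ g, i ∘ₗ (ρ g).baseChange k' = (σ g).baseChange k' ∘ₗ i)
    (hpr : ∀ g, pr ∘ₗ (σ g).baseChange k' = (ρ g).baseChange k' ∘ₗ pr)
    (hpri : pr ∘ₗ i = LinearMap.id) :
    IsDirectSummand k[G] (ι → ρ.asModule) (ι → σ.asModule) :=
  ⟨piAsModuleHomOfBaseChange b i hi, piAsModuleHomOfBaseChange b pr hpr, LinearMap.ext fun u => by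
    have hpri' : ∀ t, pr (i t) = t := LinearMap.congr_fun hpri
    simp [piAsModuleHomOfBaseChange, hpri']⟩

end Representation

theorem statement_7_general (k k' G : Type) [Field k] [Field k'] [Algebra k k']
    [FiniteDimensional k k'] [Group G]
    (V W : Type) [AddCommGroup V] [Module k V] [AddCommGroup W] [Module k W]
    [FiniteDimensional k V]
    (ρ : Representation k G V) (σ : Representation k G W)
    (h : ∃ (i : (k' ⊗[k] V) →ₗ[k'] (k' ⊗[k] W)) (pr : (k' ⊗[k] W) →ₗ[k'] (k' ⊗[k] V)),
      (∀ g, i ∘ₗ LinearMap.baseChange k' (ρ g) = LinearMap.baseChange k' (σ g) ∘ₗ i) ∧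
      (∀ g, pr ∘ₗ LinearMap.baseChange k' (σ g) = LinearMap.baseChange k' (ρ g) ∘ₗ pr) ∧
      pr ∘ₗ i = LinearMap.id) :
    ∃ (i : V →ₗ[k] W) (pr : W →ₗ[k] V),
      (∀ g, i ∘ₗ ρ g = σ g ∘ₗ i) ∧ (∀ g, pr ∘ₗ σ g = ρ g ∘ₗ pr) ∧
      pr ∘ₗ i = LinearMap.id := by
  obtain ⟨i, pr, hi, hpr, hpri⟩ := h
  have : Nonempty (Fin (finrank k k')) := ⟨⟨0, finrank_pos⟩⟩
  have : IsNoetherian (MonoidAlgebra k G) ρ.asModule := isNoetherian_of_tower k inferInstance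
  have : IsArtinian (MonoidAlgebra k G) ρ.asModule := isArtinian_of_tower k inferInstance
  have hpi := Representation.isDirectSummand_pi_asModule_of_baseChange (finBasis k k') i pr
    hi hpr hpri
  exact Representation.exists_intertwining_retraction_of_isDirectSummand hpi.of_pi_pi

/-- Noether–Deuring: For a finite field extension `k ⊆ k'`, a finite
group `G`, and finitely generated `kG`-modules `M`, `N`, if `k' ⊗_k M` is a direct
summand of `k' ⊗_k N` as `k'G`-modules, then `M` is a direct summand of `N` as
`kG`-modules. -/
theorem statement_7 (k k' G : Type) [Field k] [Field k'] [Algebra k k']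
    [FiniteDimensional k k'] [Group G] [Finite G]
    (V W : Type) [AddCommGroup V] [Module k V] [AddCommGroup W] [Module k W]
    [FiniteDimensional k V] [FiniteDimensional k W]
    (ρ : Representation k G V) (σ : Representation k G W)
    (h : ∃ (i : (k' ⊗[k] V) →ₗ[k'] (k' ⊗[k] W)) (pr : (k' ⊗[k] W) →ₗ[k'] (k' ⊗[k] V)),
      (∀ g, i ∘ₗ LinearMap.baseChange k' (ρ g) = LinearMap.baseChange k' (σ g) ∘ₗ i) ∧
      (∀ g, pr ∘ₗ LinearMap.baseChange k' (σ g) = LinearMap.baseChange k' (ρ g) ∘ₗ pr) ∧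
      pr ∘ₗ i = LinearMap.id) :
    ∃ (i : V →ₗ[k] W) (pr : W →ₗ[k] V),
      (∀ g, i ∘ₗ ρ g = σ g ∘ₗ i) ∧ (∀ g, pr ∘ₗ σ g = ρ g ∘ₗ pr) ∧
      pr ∘ₗ i = LinearMap.id :=
  statement_7_general k k' G V W ρ σ h
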